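/- Let p̃, q̃ be integers with p̃ ≠ 0 and q̃ ≥ 97·|p̃|, and let u be any complex root of the quartic equation u⁴ + 8u² − 12·i·u − 4 = 0. Then the open disc {t ∈ ℂ : |t − (q̃² + 5·p̃·q̃ + 10·p̃²)| < 74·|p̃|³/q̃} (which contains the real asymptotic interval) and the open disc {t ∈ ℂ : |t − c(u)| < 51·|p̃|³/q̃} are disjoint. -/

import Mathlib

/-!
Every root `u` of the quartic has `|u| ≤ 4`, and the two centers differ by
`(1 − i) q̃² − (u − 5) p̃ q̃ + ((u + i u²)/2 + 10) p̃²`. Hence their distance is at least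
`q̃² − 9|p̃| q̃ − 20|p̃|²`, which exceeds the sum `125|p̃|³/q̃` of the radii once `q̃ ≥ 97|p̃|`.
-/

/-- The center `c(u) = i q̃² + u p̃ q̃ − ((u + i u²)/2) p̃²` of the asymptotic disc
associated with a root `u` of the quartic `u⁴ + 8u² − 12iu − 4 = 0`. -/
noncomputable def discCenter (p' q' : ℤ) (u : ℂ) : ℂ :=
  Complex.I * (q' : ℂ) ^ 2 + u * (p' : ℂ) * (q' : ℂ)
    - ((u + Complex.I * u ^ 2) / 2) * (p' : ℂ) ^ 2

open Complex Metric

lemma norm_le_four_of_quartic_eq_zero {u : ℂ}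
    (hu : u ^ 4 + 8 * u ^ 2 - 12 * I * u - 4 = 0) : ‖u‖ ≤ 4 := by
  have hbound : ‖u‖ ^ 4 ≤ 8 * ‖u‖ ^ 2 + 12 * ‖u‖ + 4 :=
    calc ‖u‖ ^ 4 = ‖-(8 * u ^ 2) + 12 * I * u + 4‖ := by
          rw [← norm_pow, show u ^ 4 = -(8 * u ^ 2) + 12 * I * u + 4 by linear_combination hu]
      _ ≤ ‖-(8 * u ^ 2)‖ + ‖12 * I * u‖ + ‖(4 : ℂ)‖ := norm_add₃_le
      _ = 8 * ‖u‖ ^ 2 + 12 * ‖u‖ + 4 := by simp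
  by_contra! h
  nlinarith [mul_le_mul h.le h.le (by norm_num) (norm_nonneg u), sq_nonneg ‖u‖]

lemma one_le_norm_one_sub_I : 1 ≤ ‖1 - I‖ := by
  simpa using abs_im_le_norm (1 - I)

lemma norm_sub_discCenter_ge {p q : ℤ} {u : ℂ} (hu : ‖u‖ ≤ 4) :
    |(q : ℝ)| ^ 2 - 9 * |(p : ℝ)| * |(q : ℝ)| - 20 * |(p : ℝ)| ^ 2
      ≤ ‖((q : ℂ) ^ 2 + 5 * p * q + 10 * (p : ℂ) ^ 2) - discCenter p q u‖ := by
  have hsplit : ((q : ℂ) ^ 2 + 5 * p * q + 10 * (p : ℂ) ^ 2) - discCenter p q u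
      = (1 - I) * (q : ℂ) ^ 2 - ((u - 5) * p * q - ((u + I * u ^ 2) / 2 + 10) * (p : ℂ) ^ 2) := by
    unfold discCenter; ring
  have hlin : ‖u - 5‖ ≤ 9 := (norm_sub_le _ _).trans (by simp; linarith)
  have hquad : ‖(u + I * u ^ 2) / 2 + 10‖ ≤ 20 := by
    have hsum : ‖u + I * u ^ 2‖ ≤ ‖u‖ + ‖u‖ ^ 2 := (norm_add_le _ _).trans (by simp)
    calc ‖(u + I * u ^ 2) / 2 + 10‖ ≤ ‖u + I * u ^ 2‖ / 2 + 10 :=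
          (norm_add_le _ _).trans (by norm_num [norm_div])
      _ ≤ 20 := by nlinarith [norm_nonneg u]
  have hleading : |(q : ℝ)| ^ 2 ≤ ‖(1 - I) * (q : ℂ) ^ 2‖ := by
    rw [norm_mul, norm_pow, norm_intCast]
    exact le_mul_of_one_le_left (by positivity) one_le_norm_one_sub_I
  have hrest : ‖(u - 5) * p * q - ((u + I * u ^ 2) / 2 + 10) * (p : ℂ) ^ 2‖
      ≤ 9 * |(p : ℝ)| * |(q : ℝ)| + 20 * |(p : ℝ)| ^ 2 := by
    refine (norm_sub_le _ _).trans ?_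
    simp only [norm_mul, norm_pow, norm_intCast]
    gcongr
  rw [hsplit]
  linarith [norm_sub_norm_le ((1 - I) * (q : ℂ) ^ 2)
    ((u - 5) * p * q - ((u + I * u ^ 2) / 2 + 10) * (p : ℂ) ^ 2)]

lemma cube_div_le_of_ninetySeven_mul_le {P Q : ℝ} (hP : 0 ≤ P) (hPQ : 97 * P ≤ Q) :
    125 * P ^ 3 / Q ≤ Q ^ 2 - 9 * P * Q - 20 * P ^ 2 := by
  rcases hP.eq_or_lt with rfl | hPpos
  · simpa using sq_nonneg Q
  have hQ : 0 < Q := by linarith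
  rw [div_le_iff₀ hQ]
  nlinarith [mul_nonneg (mul_nonneg (sub_nonneg.2 hPQ) hP) hQ.le,
    mul_nonneg (mul_nonneg (sub_nonneg.2 hPQ) hQ.le) hQ.le, pow_pos hPpos 3]

theorem stmt_10_general (p' q' : ℤ) (hq : 97 * |p'| ≤ q') (u : ℂ)
    (hu : u ^ 4 + 8 * u ^ 2 - 12 * Complex.I * u - 4 = 0) :
    ∀ t : ℂ, ¬(‖t - ((q' : ℂ) ^ 2 + 5 * (p' : ℂ) * (q' : ℂ) + 10 * (p' : ℂ) ^ 2)‖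
        < 74 * |(p' : ℝ)| ^ 3 / (q' : ℝ) ∧
      ‖t - discCenter p' q' u‖ < 51 * |(p' : ℝ)| ^ 3 / (q' : ℝ)) := by
  rintro t ⟨hreal, hroot⟩
  have hq' : 97 * |(p' : ℝ)| ≤ q' := by exact_mod_cast hq
  have habs_q : |(q' : ℝ)| = q' := abs_of_nonneg (by linarith [abs_nonneg (p' : ℝ)])
  have hsep : 74 * |(p' : ℝ)| ^ 3 / q' + 51 * |(p' : ℝ)| ^ 3 / q'
      ≤ dist ((q' : ℂ) ^ 2 + 5 * (p' : ℂ) * (q' : ℂ) + 10 * (p' : ℂ) ^ 2) (discCenter p' q' u) := by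
    calc _ = 125 * |(p' : ℝ)| ^ 3 / q' := by ring
      _ ≤ (q' : ℝ) ^ 2 - 9 * |(p' : ℝ)| * q' - 20 * |(p' : ℝ)| ^ 2 :=
        cube_div_le_of_ninetySeven_mul_le (abs_nonneg _) hq'
      _ ≤ _ := by
        rw [dist_eq_norm]
        simpa only [habs_q] using
          norm_sub_discCenter_ge (p := p') (q := q') (norm_le_four_of_quartic_eq_zero hu)
  exact Set.disjoint_left.mp (ball_disjoint_ball hsep) (mem_ball_iff_norm.mpr hreal)
    (mem_ball_iff_norm.mpr hroot)

/-- For integers `p̃ ≠ 0`, `q̃ ≥ 97|p̃|` and any root `u` of `u⁴ + 8u² − 12iu − 4 = 0`,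
the open disc of radius `74|p̃|³/q̃` centered at the real point `q̃² + 5p̃q̃ + 10p̃²`
and the open disc of radius `51|p̃|³/q̃` centered at `c(u)` are disjoint. -/
theorem stmt_10 (p' q' : ℤ) (hp : p' ≠ 0) (hq : 97 * |p'| ≤ q') (u : ℂ)
    (hu : u ^ 4 + 8 * u ^ 2 - 12 * Complex.I * u - 4 = 0) :
    ∀ t : ℂ, ¬(‖t - ((q' : ℂ) ^ 2 + 5 * (p' : ℂ) * (q' : ℂ) + 10 * (p' : ℂ) ^ 2)‖
        < 74 * |(p' : ℝ)| ^ 3 / (q' : ℝ) ∧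
      ‖t - discCenter p' q' u‖ < 51 * |(p' : ℝ)| ^ 3 / (q' : ℝ)) :=
  stmt_10_general p' q' hq u hu
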